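/- arXiv:1001.1748 — 2 statements merged into one kernel-verified Lean document; each statement's English description precedes it below -/
import Mathlib

section
/- Let Ω be a Cantor group, T a minimal translation of Ω with identity element e, and f ∈ C(Ω,ℝ); set F(ω) = (f(Tⁿ(ω)))_{n∈ℤ}. Then the map φ : Ω → hull(F(e)), φ(ω) = F(ω), is a continuous surjective group homomorphism onto hull(F(e)) (equipped with its canonical group structure with identity F(e)); consequently hull(F(e)) is isomorphic as a topological group to the quotient Ω/ker(φ). -/
/-! `F(ω)` samples `f` along the dense orbit `ω·aⁿ`, so by continuity `F(ω) = F(ω')` iff the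
translates `x ↦ f(x·ω)` and `x ↦ f(x·ω')` agree, i.e. iff `ω ≡ ω'` modulo the group `P` of
periods of `f`. Since `F` is continuous and sends `aᵏ` to the `k`-th shift of `F(1)`, its image
is `hull (F(1))`, so `F` induces a continuous bijection from the compact group `Ω/P` onto the
hull, hence a homeomorphism; transporting the multiplication of `Ω/P` along it gives the
canonical group structure on the hull. -/

open BoundedContinuousFunction Filter

noncomputable def shiftk (k : ℤ) (d : ℤ →ᵇ ℝ) : ℤ →ᵇ ℝ :=
  d.compContinuous ⟨fun n => n + k, continuous_of_discreteTopology⟩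

noncomputable def orb (d : ℤ →ᵇ ℝ) : Set (ℤ →ᵇ ℝ) := Set.range (fun k : ℤ => shiftk k d)

noncomputable def hull (d : ℤ →ᵇ ℝ) : Set (ℤ →ᵇ ℝ) := closure (orb d)

def IsPeriodicPotential (p : ℤ →ᵇ ℝ) : Prop := (orb p).Finite

def IsLimitPeriodic (d : ℤ →ᵇ ℝ) : Prop :=
  d ∈ closure {p : ℤ →ᵇ ℝ | IsPeriodicPotential p}

noncomputable def shiftMem (d : ℤ →ᵇ ℝ) (k : ℤ) : ↥(hull d) :=
  ⟨shiftk k d, subset_closure ⟨k, rfl⟩⟩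

noncomputable def hullId (d : ℤ →ᵇ ℝ) : ↥(hull d) :=
  ⟨d, subset_closure ⟨0, by ext n; simp [shiftk]⟩⟩

noncomputable def freqModule (d : ℤ →ᵇ ℝ) : AddSubgroup ℝ :=
  AddSubgroup.closure {α : ℝ | ∃ L : ℂ, L ≠ 0 ∧
    Filter.Tendsto (fun n : ℕ => (1 / (2 * (n : ℂ))) *
      ∑ k ∈ Finset.Icc (-(n : ℤ)) (n : ℤ), (d k : ℂ) * Complex.exp (-(Complex.I) * k * α))
      Filter.atTop (nhds L)}

def IsFreqIntegerSet (d : ℤ →ᵇ ℝ) (S : Set ℕ) : Prop :=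
  (∀ n ∈ S, 0 < n) ∧
  freqModule d = AddSubgroup.closure ((fun n : ℕ => 2 * Real.pi / (n : ℝ)) '' S)

def CanonicalMul (d : ℤ →ᵇ ℝ) (m : ↥(hull d) → ↥(hull d) → ↥(hull d)) : Prop :=
  Continuous (fun p : ↥(hull d) × ↥(hull d) => m p.1 p.2) ∧
  ∀ k l : ℤ, m (shiftMem d k) (shiftMem d l) = shiftMem d (k + l)

def HullGroupIso (d e : ℤ →ᵇ ℝ) : Prop :=
  ∃ md me, CanonicalMul d md ∧ CanonicalMul e me ∧
    ∃ h : ↥(hull d) ≃ₜ ↥(hull e), ∀ x y, h (md x y) = me (h x) (h y)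
variable {Ω : Type*} [TopologicalSpace Ω] [CommGroup Ω] [IsTopologicalGroup Ω] [CompactSpace Ω]
  [TotallyDisconnectedSpace Ω]

/-- The translation `T(ω) = ω·a` is minimal: every `T`-orbit is dense. -/
def IsMinimalTranslation (a : Ω) : Prop :=
  ∀ ω : Ω, Dense (Set.range fun n : ℤ => ω * a ^ n)

def NoIsolatedPoints (Ω : Type*) [TopologicalSpace Ω] : Prop :=
  ∀ ω : Ω, Filter.NeBot (nhdsWithin ω {ω}ᶜ)

/-- `F(ω) = (f(Tⁿ(ω)))_{n ∈ ℤ}` where `T` is the translation by `a`. -/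
noncomputable def sample (f : C(Ω, ℝ)) (a ω : Ω) : ℤ →ᵇ ℝ :=
  (BoundedContinuousFunction.mkOfCompact f).compContinuous
    ⟨fun n : ℤ => ω * a ^ n, continuous_of_discreteTopology⟩

section Periods

variable {G : Type*} [Group G] {β : Type*}

def periods (f : G → β) : Subgroup G where
  carrier := {g | ∀ x, f (x * g) = f x}
  one_mem' x := by rw [mul_one]
  mul_mem' {g h} hg hh x := by rw [← mul_assoc, hh, hg]
  inv_mem' {g} hg x := by rw [← hg (x * g⁻¹), inv_mul_cancel_right]

theorem mk_eq_mk_periods_iff {f : G → β} {x y : G} :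
    (x : G ⧸ periods f) = y ↔ ∀ w, f (w * x) = f (w * y) := by
  rw [QuotientGroup.eq]
  refine ⟨fun h w => ?_, fun h z => ?_⟩
  · rw [← h (w * x), mul_assoc, mul_inv_cancel_left]
  · rw [← mul_assoc, ← h, inv_mul_cancel_right]

end Periods

theorem IsMinimalTranslation.dense_range_zpow {G : Type*} [TopologicalSpace G] [CommGroup G]
    {a : G} (h : IsMinimalTranslation a) : Dense (Set.range (a ^ · : ℤ → G)) := by
  simpa using h 1

section Sample

variable {G : Type*} [TopologicalSpace G] [CommGroup G] [CompactSpace G] (f : C(G, ℝ)) (a : G)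

theorem shiftk_sample (ω : G) (k : ℤ) : shiftk k (sample f a ω) = sample f a (ω * a ^ k) := by
  ext n
  simp only [shiftk, sample, compContinuous_apply, ContinuousMap.coe_mk, mkOfCompact_apply]
  rw [mul_assoc, ← zpow_add, add_comm]

variable [ContinuousMul G]

theorem continuous_sample : Continuous (sample f a) := by
  let translates : C(G, C(G, ℝ)) := (f.comp ⟨fun p : G × G => p.1 * p.2, continuous_mul⟩).curry
  have h : sample f a = fun ω => (mkOfCompact (translates ω)).compContinuous
      ⟨(a ^ · : ℤ → G), continuous_of_discreteTopology⟩ := rfl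
  rw [h]
  exact (continuous_compContinuous _).comp
    ((ContinuousMap.isometryEquivBoundedOfCompact G ℝ).continuous.comp translates.continuous)

variable {a} (hdense : Dense (Set.range (a ^ · : ℤ → G)))
include hdense

theorem sample_eq_sample_iff {ω ω' : G} :
    sample f a ω = sample f a ω' ↔ (ω : G ⧸ periods f) = ω' := by
  have hcont (ω : G) : Continuous fun x => f (ω * x) := f.continuous.comp (continuous_const_mul ω)
  rw [mk_eq_mk_periods_iff, BoundedContinuousFunction.ext_iff]
  simp only [mul_comm _ ω, mul_comm _ ω']
  refine ⟨fun h x => ?_, fun h n => h (a ^ n)⟩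
  exact congrFun ((hcont ω).ext_on hdense (hcont ω') (Set.forall_mem_range.2 h)) x

theorem range_sample : Set.range (sample f a) = hull (sample f a 1) := by
  have horb : orb (sample f a 1) = sample f a '' Set.range (a ^ · : ℤ → G) := by
    rw [← Set.range_comp]
    exact congrArg Set.range (funext fun k => by simp [shiftk_sample])
  rw [hull, horb, ← image_closure_of_isCompact isClosed_closure.isCompact
    (continuous_sample f a).continuousOn, hdense.closure_eq, Set.image_univ]

theorem sample_mem_hull (ω : G) : sample f a ω ∈ hull (sample f a 1) :=
  range_sample f hdense ▸ Set.mem_range_self ω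

noncomputable def sampleHomeomorph : (G ⧸ periods f) ≃ₜ hull (sample f a 1) :=
  let φ : G ⧸ periods f → hull (sample f a 1) :=
    Quotient.lift (fun ω => ⟨sample f a ω, sample_mem_hull f hdense ω⟩)
      fun _ _ h => Subtype.ext ((sample_eq_sample_iff f hdense).2 (Quotient.sound h))
  have hinj : φ.Injective := by
    rintro ⟨x⟩ ⟨y⟩ h
    exact (sample_eq_sample_iff f hdense).1 (congrArg Subtype.val h)
  have hsurj : φ.Surjective := by
    rintro ⟨_, hx⟩
    obtain ⟨ω, rfl⟩ := (range_sample f hdense).ge hx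
    exact ⟨ω, rfl⟩
  Continuous.homeoOfEquivCompactToT2 (f := Equiv.ofBijective φ ⟨hinj, hsurj⟩)
    (continuous_quot_lift _ ((continuous_sample f a).subtype_mk _))

@[simp]
theorem sampleHomeomorph_mk (ω : G) :
    sampleHomeomorph f hdense ω = ⟨sample f a ω, sample_mem_hull f hdense ω⟩ :=
  rfl

end Sample

theorem canonicalMul_of_homeomorph {d : ℤ →ᵇ ℝ} {H : Type*} [TopologicalSpace H] [Group H]
    [ContinuousMul H] (E : H ≃ₜ hull d) (h : H) (hE : ∀ k : ℤ, E (h ^ k) = shiftMem d k) :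
    CanonicalMul d fun x y => E (E.symm x * E.symm y) := by
  refine ⟨E.continuous.comp ((E.symm.continuous.comp continuous_fst).mul
    (E.symm.continuous.comp continuous_snd)), fun k l => ?_⟩
  beta_reduce
  rw [← hE, ← hE, ← hE, E.symm_apply_apply, E.symm_apply_apply, zpow_add]

theorem statement_10_general {Ω : Type*} [TopologicalSpace Ω] [CommGroup Ω] [IsTopologicalGroup Ω]
    [CompactSpace Ω] (a : Ω) (hmin : IsMinimalTranslation a) (f : C(Ω, ℝ)) :
    ∃ hmem : ∀ ω : Ω, sample f a ω ∈ hull (sample f a 1),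
      ∃ m, CanonicalMul (sample f a 1) m ∧
        Continuous (fun ω : Ω => (⟨sample f a ω, hmem ω⟩ : ↥(hull (sample f a 1)))) ∧
        Function.Surjective
          (fun ω : Ω => (⟨sample f a ω, hmem ω⟩ : ↥(hull (sample f a 1)))) ∧
        (∀ ω₁ ω₂ : Ω,
          m ⟨sample f a ω₁, hmem ω₁⟩ ⟨sample f a ω₂, hmem ω₂⟩
            = ⟨sample f a (ω₁ * ω₂), hmem (ω₁ * ω₂)⟩) ∧
        -- the canonical identity of `hull (F(e))` is `F(e) = F(1)`
        m (hullId (sample f a 1)) (hullId (sample f a 1)) = hullId (sample f a 1) ∧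
        -- consequently `hull (F(e)) ≅ Ω / ker φ`
        ∃ N : Subgroup Ω, ((N : Set Ω) = {ω : Ω | sample f a ω = sample f a 1}) ∧
          ∃ e : (Ω ⧸ N) ≃ₜ ↥(hull (sample f a 1)),
            ∀ x y : Ω ⧸ N, e (x * y) = m (e x) (e y) := by
  have hdense := hmin.dense_range_zpow
  set E := sampleHomeomorph f hdense
  have hmul (ω₁ ω₂ : Ω) : E (E.symm (E ω₁) * E.symm (E ω₂)) = E ↑(ω₁ * ω₂) := by
    rw [E.symm_apply_apply, E.symm_apply_apply, QuotientGroup.mk_mul]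
  refine ⟨sample_mem_hull f hdense, fun x y => E (E.symm x * E.symm y),
    canonicalMul_of_homeomorph E a fun k => ?_, (continuous_sample f a).subtype_mk _,
    fun x => ?_, hmul, ?_, periods f, ?_, E, fun x y => ?_⟩
  · rw [← QuotientGroup.mk_zpow, sampleHomeomorph_mk]
    exact Subtype.ext <| show sample f a (a ^ k) = shiftk k (sample f a 1) by
      rw [shiftk_sample, one_mul]
  · obtain ⟨ω, hω⟩ := (range_sample f hdense).ge x.2
    exact ⟨ω, Subtype.ext hω⟩
  · change E (E.symm (E 1) * E.symm (E 1)) = E 1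
    rw [E.symm_apply_apply, mul_one]
  · ext ω
    rw [SetLike.mem_coe, ← QuotientGroup.eq_one_iff, ← QuotientGroup.mk_one,
      ← sample_eq_sample_iff f hdense]
    rfl
  · simp only [E.symm_apply_apply]

/-- With `e = 1` the identity of the Cantor group `Ω`, the map
`φ : Ω → hull (F(e))`, `φ(ω) = F(ω)`, is a continuous surjective group homomorphism onto
`hull (F(e))` with its canonical group structure (identity `F(e)`); consequently
`hull (F(e)) ≅ Ω / ker φ` as topological groups. -/
theorem statement_10 {Ω : Type*} [TopologicalSpace Ω] [CommGroup Ω] [IsTopologicalGroup Ω]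
    [CompactSpace Ω] [TotallyDisconnectedSpace Ω] (hni : NoIsolatedPoints Ω)
    (a : Ω) (hmin : IsMinimalTranslation a) (f : C(Ω, ℝ)) :
    ∃ hmem : ∀ ω : Ω, sample f a ω ∈ hull (sample f a 1),
      ∃ m, CanonicalMul (sample f a 1) m ∧
        Continuous (fun ω : Ω => (⟨sample f a ω, hmem ω⟩ : ↥(hull (sample f a 1)))) ∧
        Function.Surjective
          (fun ω : Ω => (⟨sample f a ω, hmem ω⟩ : ↥(hull (sample f a 1)))) ∧
        (∀ ω₁ ω₂ : Ω,
          m ⟨sample f a ω₁, hmem ω₁⟩ ⟨sample f a ω₂, hmem ω₂⟩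
            = ⟨sample f a (ω₁ * ω₂), hmem (ω₁ * ω₂)⟩) ∧
        -- the canonical identity of `hull (F(e))` is `F(e) = F(1)`
        m (hullId (sample f a 1)) (hullId (sample f a 1)) = hullId (sample f a 1) ∧
        -- consequently `hull (F(e)) ≅ Ω / ker φ`
        ∃ N : Subgroup Ω, ((N : Set Ω) = {ω : Ω | sample f a ω = sample f a 1}) ∧
          ∃ e : (Ω ⧸ N) ≃ₜ ↥(hull (sample f a 1)),
            ∀ x y : Ω ⧸ N, e (x * y) = m (e x) (e y) :=
  statement_10_general a hmin f
end

section
/- Let Ω be a Cantor group with a minimal translation T and identity element e. For every limit-periodic potential d ∈ ℓ∞(ℤ) such that hull(d) is isomorphic to Ω as a topological group, there exists f ∈ C(Ω,ℝ) with f(Tⁿ(e)) = d_n for every n ∈ ℤ. -/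
open BoundedContinuousFunction Filter

variable {Ω : Type*} [TopologicalSpace Ω] [CommGroup Ω] [IsTopologicalGroup Ω] [CompactSpace Ω]
  [TotallyDisconnectedSpace Ω]

/-! Let `b` be the image of the unit shift under the isomorphism `hull d ≃ₜ Ω`. Both `a` and `b`
generate dense cyclic subgroups of the profinite group `Ω`, so for every open normal subgroup `N`
we have `aᵏ ∈ N ↔ [Ω : N] ∣ k ↔ bᵏ ∈ N`. Since open normal subgroups separate points, the closure
of the cyclic subgroup generated by `(a, b)` in `Ω × Ω` is the graph of a function `θ`, continuous
because the first projection of this compact graph is a homeomorphism onto `Ω`, and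
`θ (aᵏ) = bᵏ`. Reading off the `0`-th coordinate of the hull element corresponding to `θ ω`
gives the required `f`. -/

section DenseZPowers

variable {G : Type*} [Group G] [TopologicalSpace G] [IsTopologicalGroup G]

theorem zpow_mem_iff_index_dvd {a : G} (ha : DenseRange (a ^ · : ℤ → G))
    (N : OpenNormalSubgroup G) (k : ℤ) : a ^ k ∈ N ↔ (N.index : ℤ) ∣ k := by
  have hgen : ∀ q : G ⧸ N.toSubgroup, q ∈ Subgroup.zpowers (a : G ⧸ N.toSubgroup) := by
    intro q
    have hdense : DenseRange fun k : ℤ => (a : G ⧸ N.toSubgroup) ^ k :=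
      QuotientGroup.mk_surjective.denseRange.comp ha continuous_quot_mk
    obtain ⟨l, hl⟩ := hdense.exists_mem_open (isOpen_discrete {q}) ⟨q, rfl⟩
    exact ⟨l, hl⟩
  rw [Subgroup.index, ← orderOf_eq_card_of_forall_mem_zpowers hgen, orderOf_dvd_iff_zpow_eq_one,
    ← QuotientGroup.mk_zpow, QuotientGroup.eq_one_iff]
  rfl

theorem zpow_mem_iff_zpow_mem {a b : G} (ha : DenseRange (a ^ · : ℤ → G))
    (hb : DenseRange (b ^ · : ℤ → G)) (N : OpenNormalSubgroup G) (k : ℤ) :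
    a ^ k ∈ N ↔ b ^ k ∈ N := by
  rw [zpow_mem_iff_index_dvd ha, zpow_mem_iff_index_dvd hb]

variable [CompactSpace G] [TotallyDisconnectedSpace G]

theorem snd_eq_one_of_mem_closure_zpowers {a b : G} (ha : DenseRange (a ^ · : ℤ → G))
    (hb : DenseRange (b ^ · : ℤ → G)) {y : G}
    (hy : (1, y) ∈ (Subgroup.zpowers (a, b)).topologicalClosure) : y = 1 := by
  by_contra hy1
  obtain ⟨N, hN⟩ := ProfiniteGrp.exist_openNormalSubgroup_sub_open_nhds_of_one
    isOpen_compl_singleton (Ne.symm hy1)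
  have hclosed : IsClosed {p : G × G | p.1 ∈ N → p.2 ∈ N} :=
    isClosed_imp (N.isOpen.preimage continuous_fst) (N.isClosed.preimage continuous_snd)
  have hsub : (Subgroup.zpowers (a, b) : Set (G × G)) ⊆ {p | p.1 ∈ N → p.2 ∈ N} := by
    rintro _ ⟨k, rfl⟩
    exact (zpow_mem_iff_zpow_mem ha hb N k).mp
  exact hN (closure_minimal hsub hclosed hy N.one_mem) rfl

theorem exists_continuous_map_zpow_eq_zpow {a b : G} (ha : DenseRange (a ^ · : ℤ → G))
    (hb : DenseRange (b ^ · : ℤ → G)) : ∃ θ : C(G, G), ∀ k : ℤ, θ (a ^ k) = b ^ k := by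
  set Γ := (Subgroup.zpowers (a, b)).topologicalClosure
  have hmem : ∀ k : ℤ, (a ^ k, b ^ k) ∈ Γ := fun k =>
    Subgroup.le_topologicalClosure _ ⟨k, rfl⟩
  have : CompactSpace Γ :=
    isCompact_iff_compactSpace.mp (Subgroup.isClosed_topologicalClosure _).isCompact
  have hcont : Continuous fun p : Γ => p.1.1 := by fun_prop
  have hinj : Function.Injective fun p : Γ => p.1.1 := by
    intro p q hpq
    have h1 : (p * q⁻¹ : Γ).1.1 = 1 := by simp [show p.1.1 = q.1.1 from hpq]
    have h2 := snd_eq_one_of_mem_closure_zpowers ha hb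
      (show ((1 : G), (p * q⁻¹).1.2) ∈ Γ from h1 ▸ (p * q⁻¹).2)
    exact Subtype.ext (Prod.ext hpq (mul_inv_eq_one.mp h2))
  have hsurj : Function.Surjective fun p : Γ => p.1.1 := by
    rw [← Set.range_eq_univ, ← (isCompact_range hcont).isClosed.closure_eq, ← Set.univ_subset_iff]
    exact ha.closure_eq ▸ closure_mono (Set.range_subset_iff.mpr fun k => ⟨⟨_, hmem k⟩, rfl⟩)
  let e : Γ ≃ₜ G :=
    Continuous.homeoOfEquivCompactToT2 (f := .ofBijective _ ⟨hinj, hsurj⟩) hcont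
  refine ⟨⟨fun x => (e.symm x).1.2, by fun_prop⟩, fun k => ?_⟩
  have : e.symm (a ^ k) = ⟨_, hmem k⟩ := e.symm_apply_eq.mpr rfl
  simp [this]

end DenseZPowers

theorem eq_zpow_of_map_add {G : Type*} [Group G] {φ : ℤ → G}
    (hφ : ∀ k l, φ (k + l) = φ k * φ l) (k : ℤ) : φ k = φ 1 ^ k :=
  AddMonoidHom.apply_int _ (AddMonoidHom.mk' (fun k => Additive.ofMul (φ k)) hφ) k

theorem denseRange_shiftMem (d : ℤ →ᵇ ℝ) : DenseRange (shiftMem d) := by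
  rw [DenseRange, Topology.IsInducing.subtypeVal.dense_iff]
  rintro ⟨x, hx⟩
  rwa [← Set.range_comp]

theorem shiftMem_apply_zero (d : ℤ →ᵇ ℝ) (k : ℤ) : (shiftMem d k : ℤ →ᵇ ℝ) 0 = d k := by
  simp [shiftMem, shiftk]

theorem statement_13_general {Ω : Type*} [TopologicalSpace Ω] [CommGroup Ω] [IsTopologicalGroup Ω]
    [CompactSpace Ω] [TotallyDisconnectedSpace Ω]
    (a : Ω) (hmin : IsMinimalTranslation a)
    (d : ℤ →ᵇ ℝ)
    (hiso : ∃ m, CanonicalMul d m ∧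
      ∃ h : ↥(hull d) ≃ₜ Ω, ∀ x y, h (m x y) = h x * h y) :
    ∃ f : C(Ω, ℝ), ∀ n : ℤ, f (a ^ n) = d n := by
  obtain ⟨m, ⟨-, hms⟩, h, hhom⟩ := hiso
  have hb : ∀ k : ℤ, h (shiftMem d k) = h (shiftMem d 1) ^ k :=
    eq_zpow_of_map_add fun k l => by rw [← hms, hhom]
  have hdb : DenseRange (h (shiftMem d 1) ^ · : ℤ → Ω) := by
    rw [← funext hb]
    exact h.surjective.denseRange.comp (denseRange_shiftMem d) h.continuous
  have hda : DenseRange (a ^ · : ℤ → Ω) := by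
    simpa only [DenseRange, one_mul] using hmin 1
  obtain ⟨θ, hθ⟩ := exists_continuous_map_zpow_eq_zpow hda hdb
  refine ⟨⟨fun ω => (h.symm (θ ω) : ℤ →ᵇ ℝ) 0, by fun_prop⟩, fun n => ?_⟩
  simp only [ContinuousMap.coe_mk, hθ, ← hb, Homeomorph.symm_apply_apply, shiftMem_apply_zero]

/-- If `Ω` is a Cantor group with minimal translation `T` (by `a`) and
`d ∈ ℓ∞(ℤ)` is limit-periodic with `hull d` isomorphic to `Ω` as a topological group, then
there is `f ∈ C(Ω,ℝ)` with `f(Tⁿ(e)) = d_n` (i.e. `f(aⁿ) = d n`) for every `n ∈ ℤ`. -/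
theorem statement_13 {Ω : Type*} [TopologicalSpace Ω] [CommGroup Ω] [IsTopologicalGroup Ω]
    [CompactSpace Ω] [TotallyDisconnectedSpace Ω] (hni : NoIsolatedPoints Ω)
    (a : Ω) (hmin : IsMinimalTranslation a)
    (d : ℤ →ᵇ ℝ) (hd : IsLimitPeriodic d)
    (hiso : ∃ m, CanonicalMul d m ∧
      ∃ h : ↥(hull d) ≃ₜ Ω, ∀ x y, h (m x y) = h x * h y) :
    ∃ f : C(Ω, ℝ), ∀ n : ℤ, f (a ^ n) = d n :=
  statement_13_general a hmin d hiso
end
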